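/- arXiv:2604.26818 — 6 statements merged into one kernel-verified Lean document; each statement's English description precedes it below -/
import Mathlib

section
/- Let W be a symmetric n×n real matrix with nonnegative entries, D the diagonal matrix with D_ii = d_i = Σ_j w_ij, L = D − W, and γ ≥ 0 with d_i + γ > 0 for all i. Define the transition matrix P = (D + γI)^{-1} W. If the matrix L_uu + γI is invertible, then I − P_uu is invertible and (L_uu + γI)^{-1} W_ul = (I − P_uu)^{-1} P_ul; in particular, the regularized harmonic function solution ℓ_u = (L_uu + γI)^{-1} W_ul ℓ_l equals the random-walk solution ℓ_u = (I − P_uu)^{-1} P_ul ℓ_l. -/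
open Matrix BigOperators

/-- With the transition matrix `P = (D + γI)⁻¹ W`, if
`L_uu + γI` is invertible then `I − P_uu` is invertible and
`(L_uu + γI)⁻¹ W_ul = (I − P_uu)⁻¹ P_ul`; in particular the regularized
harmonic function solution equals the random-walk solution. -/
theorem regularized_harmonic_solution_eq_random_walk
    (n : ℕ) (W : Matrix (Fin n) (Fin n) ℝ)
    (hsym : W.IsSymm) (hnn : ∀ i j, 0 ≤ W i j)
    (γ : ℝ) (hγ : 0 ≤ γ)
    (hd : ∀ i, 0 < (∑ j, W i j) + γ)
    (l : Finset (Fin n))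
    (L : Matrix (Fin n) (Fin n) ℝ)
    (hL : L = Matrix.diagonal (fun i => ∑ j, W i j) - W)
    (P : Matrix (Fin n) (Fin n) ℝ)
    (hP : P = (Matrix.diagonal (fun i => ∑ j, W i j) +
        γ • (1 : Matrix (Fin n) (Fin n) ℝ))⁻¹ * W)
    (Luu : Matrix {i // i ∈ lᶜ} {i // i ∈ lᶜ} ℝ)
    (hLuu : Luu = Matrix.of fun i j => L i.1 j.1)
    (Wul : Matrix {i // i ∈ lᶜ} {i // i ∈ l} ℝ)
    (hWul : Wul = Matrix.of fun i j => W i.1 j.1)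
    (Puu : Matrix {i // i ∈ lᶜ} {i // i ∈ lᶜ} ℝ)
    (hPuu : Puu = Matrix.of fun i j => P i.1 j.1)
    (Pul : Matrix {i // i ∈ lᶜ} {i // i ∈ l} ℝ)
    (hPul : Pul = Matrix.of fun i j => P i.1 j.1)
    (hinv : IsUnit (Luu + γ • (1 : Matrix {i // i ∈ lᶜ} {i // i ∈ lᶜ} ℝ)).det) :
    IsUnit ((1 : Matrix {i // i ∈ lᶜ} {i // i ∈ lᶜ} ℝ) - Puu).det ∧
    (Luu + γ • (1 : Matrix {i // i ∈ lᶜ} {i // i ∈ lᶜ} ℝ))⁻¹ * Wul =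
      ((1 : Matrix {i // i ∈ lᶜ} {i // i ∈ lᶜ} ℝ) - Puu)⁻¹ * Pul ∧
    ∀ ℓl : {i // i ∈ l} → ℝ,
      (Luu + γ • (1 : Matrix {i // i ∈ lᶜ} {i // i ∈ lᶜ} ℝ))⁻¹.mulVec
          (Wul.mulVec ℓl) =
        ((1 : Matrix {i // i ∈ lᶜ} {i // i ∈ lᶜ} ℝ) - Puu)⁻¹.mulVec
          (Pul.mulVec ℓl) := by
  set d : Fin n → ℝ := fun i => ∑ j, W i j with hdd
  have hD' : (Matrix.diagonal d + γ • (1 : Matrix (Fin n) (Fin n) ℝ))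
      = Matrix.diagonal (fun i => d i + γ) := by
    ext i j
    rcases eq_or_ne i j with h | h
    · subst h
      simp [Matrix.one_apply_eq]
    · simp [Matrix.diagonal_apply_ne _ h, Matrix.one_apply_ne h]
  have hunitD' : IsUnit (Matrix.diagonal (fun i => d i + γ)).det := by
    rw [Matrix.det_diagonal]
    exact isUnit_iff_ne_zero.mpr (Finset.prod_ne_zero_iff.mpr
      (fun i _ => ne_of_gt (hd i)))
  have hDP : Matrix.diagonal (fun i => d i + γ) * P = W := by
    rw [hP, hD', ← Matrix.mul_assoc, Matrix.mul_nonsing_inv _ hunitD', Matrix.one_mul]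
  have hPentry : ∀ i j, (d i + γ) * P i j = W i j := by
    intro i j
    have := congrFun (congrFun hDP i) j
    simpa [Matrix.diagonal_mul] using this
  set Du : Matrix {i // i ∈ lᶜ} {i // i ∈ lᶜ} ℝ :=
    Matrix.diagonal (fun i => d i.1 + γ) with hDu
  set A : Matrix {i // i ∈ lᶜ} {i // i ∈ lᶜ} ℝ :=
    Luu + γ • (1 : Matrix {i // i ∈ lᶜ} {i // i ∈ lᶜ} ℝ) with hA
  have hunitDu : IsUnit Du.det := by
    rw [hDu, Matrix.det_diagonal]
    exact isUnit_iff_ne_zero.mpr (Finset.prod_ne_zero_iff.mpr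
      (fun i _ => ne_of_gt (hd i.1)))
  have key : Du * ((1 : Matrix {i // i ∈ lᶜ} {i // i ∈ lᶜ} ℝ) - Puu) = A := by
    rw [hA, hDu]
    ext i j
    rw [Matrix.diagonal_mul]
    by_cases hij : i = j
    · subst hij
      simp only [Matrix.sub_apply, Matrix.add_apply, Matrix.one_apply_eq, hLuu, hL,
        hPuu, Matrix.of_apply, Matrix.smul_apply, smul_eq_mul, mul_one,
        Matrix.diagonal_apply_eq, mul_sub]
      have := hPentry i.1 i.1
      ring_nf
      ring_nf at this
      linarith
    · have hij' : i.1 ≠ j.1 := fun h => hij (Subtype.ext h)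
      simp only [Matrix.sub_apply, Matrix.add_apply, Matrix.one_apply_ne hij, hLuu, hL,
        hPuu, Matrix.of_apply, Matrix.smul_apply, smul_eq_mul, mul_zero,
        Matrix.diagonal_apply_ne _ hij', Matrix.diagonal_apply_ne _ hij, mul_sub]
      have := hPentry i.1 j.1
      linarith
  have key2 : Du * Pul = Wul := by
    rw [hDu]
    ext i j
    rw [Matrix.diagonal_mul]
    rw [hPul, hWul]
    exact hPentry i.1 j.1
  have hdetA : A.det = Du.det * ((1 : Matrix {i // i ∈ lᶜ} {i // i ∈ lᶜ} ℝ) - Puu).det := by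
    rw [← key, Matrix.det_mul]
  have hunit1P : IsUnit ((1 : Matrix {i // i ∈ lᶜ} {i // i ∈ lᶜ} ℝ) - Puu).det := by
    rw [hdetA] at hinv
    exact isUnit_of_mul_isUnit_right hinv
  have hmain : A⁻¹ * Wul = ((1 : Matrix {i // i ∈ lᶜ} {i // i ∈ lᶜ} ℝ) - Puu)⁻¹ * Pul := by
    rw [← key2, ← key, Matrix.mul_inv_rev, Matrix.mul_assoc, ← Matrix.mul_assoc Du⁻¹,
      Matrix.nonsing_inv_mul _ hunitDu, Matrix.one_mul]
  refine ⟨hunit1P, hmain, fun ℓl => ?_⟩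
  rw [Matrix.mulVec_mulVec, Matrix.mulVec_mulVec, hmain]
end

section
/- Let W be a symmetric n×n real matrix with nonnegative entries, D the diagonal matrix with D_ii = d_i = Σ_j w_ij, L = D − W, and γ > 0. Let {1,…,n} be partitioned into a nonempty labeled set l and an unlabeled set u, and suppose ℓ ∈ ℝ^n satisfies (L_uu + γI) ℓ_u = W_ul ℓ_l. Then the confidence of every unlabeled vertex is bounded by the largest labeled confidence: for every i ∈ u, |ℓ_i| ≤ max_{j ∈ l} |ℓ_j|. In particular, if ℓ_j ∈ {−1, 1} for all j ∈ l, then |ℓ_i| ≤ 1 for all i. -/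
open Matrix BigOperators

/-!
At an unlabeled vertex `i` the system `(L_uu + γI) ℓ_u = W_ul ℓ_l` reads
`(d_i + γ) ℓ_i = Σ_j w_ij ℓ_j`. If `|ℓ|` attains its maximum `m` at an unlabeled vertex, then
`(d_i + γ) m ≤ d_i m`, so `m = 0` because `γ > 0`; otherwise the maximum is attained on `l`.
-/

theorem eq_zero_of_sum_add_mul_eq_of_abs_le {ι : Type*} [Fintype ι] {w x : ι → ℝ} {a γ : ℝ}
    (hw : ∀ j, 0 ≤ w j) (hγ : 0 < γ) (hmax : ∀ j, |x j| ≤ |a|)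
    (h : (∑ j, w j + γ) * a = ∑ j, w j * x j) : a = 0 := by
  have hbound : (∑ j, w j + γ) * |a| ≤ (∑ j, w j) * |a| :=
    calc (∑ j, w j + γ) * |a| = |∑ j, w j * x j| := by
          have hpos : 0 < ∑ j, w j + γ :=
            add_pos_of_nonneg_of_pos (Finset.sum_nonneg fun j _ => hw j) hγ
          rw [← h, abs_mul, abs_of_pos hpos]
      _ ≤ ∑ j, |w j * x j| := Finset.abs_sum_le_sum_abs _ _
      _ ≤ ∑ j, w j * |a| := Finset.sum_le_sum fun j _ => by
          rw [abs_mul, abs_of_nonneg (hw j)]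
          exact mul_le_mul_of_nonneg_left (hmax j) (hw j)
      _ = (∑ j, w j) * |a| := (Finset.sum_mul _ _ _).symm
  have : γ * |a| ≤ 0 := by linarith
  exact abs_eq_zero.1 (le_antisymm (nonpos_of_mul_nonpos_right this hγ) (abs_nonneg a))

section

variable {ι : Type*} [Fintype ι]

def IsRegularizedHarmonic (W : Matrix ι ι ℝ) (γ : ℝ) (l : Finset ι) (ℓ : ι → ℝ) : Prop :=
  ∀ i ∉ l, (∑ j, W i j + γ) * ℓ i = ∑ j, W i j * ℓ j

theorem isRegularizedHarmonic_of_mulVec_eq [DecidableEq ι] {W : Matrix ι ι ℝ} {γ : ℝ}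
    {l : Finset ι} {ℓ : ι → ℝ}
    (h : ((diagonal (fun i => ∑ j, W i j) - W).submatrix (Subtype.val : {i // i ∈ lᶜ} → ι)
        (Subtype.val : {i // i ∈ lᶜ} → ι) + γ • (1 : Matrix {i // i ∈ lᶜ} {i // i ∈ lᶜ} ℝ)) *ᵥ
        (fun i => ℓ i) =
      W.submatrix (Subtype.val : {i // i ∈ lᶜ} → ι) (Subtype.val : {j // j ∈ l} → ι) *ᵥ
        (fun j => ℓ j)) :
    IsRegularizedHarmonic W γ l ℓ := by
  intro i hi
  rw [add_mulVec, smul_mulVec, one_mulVec] at h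
  have hrow := congrFun h ⟨i, Finset.mem_compl.2 hi⟩
  simp only [Pi.add_apply, Pi.smul_apply, smul_eq_mul,
    mulVec, dotProduct, submatrix_apply, Matrix.sub_apply, diagonal_apply, sub_mul, ite_mul,
    zero_mul, Finset.sum_sub_distrib] at hrow
  rw [Finset.sum_coe_sort lᶜ (fun j => if i = j then (∑ k, W i k) * ℓ j else 0),
    Finset.sum_coe_sort lᶜ (fun j => W i j * ℓ j), Finset.sum_coe_sort l (fun j => W i j * ℓ j),
    Finset.sum_ite_eq, if_pos (Finset.mem_compl.2 hi)] at hrow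
  have hsplit := Finset.sum_compl_add_sum l (fun j => W i j * ℓ j)
  linarith

theorem IsRegularizedHarmonic.abs_le_sup' {W : Matrix ι ι ℝ} {γ : ℝ} {l : Finset ι}
    {ℓ : ι → ℝ} (h : IsRegularizedHarmonic W γ l ℓ) (hW : ∀ i j, 0 ≤ W i j) (hγ : 0 < γ)
    (hne : l.Nonempty) (i : ι) : |ℓ i| ≤ l.sup' hne fun j => |ℓ j| := by
  obtain ⟨k, -, hk⟩ := Finset.exists_mem_eq_sup' (hne.mono (Finset.subset_univ l)) fun j => |ℓ j|
  have hmax : ∀ j, |ℓ j| ≤ |ℓ k| := fun j =>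
    hk ▸ Finset.le_sup' (fun j => |ℓ j|) (Finset.mem_univ j)
  refine (hmax i).trans ?_
  by_cases hkl : k ∈ l
  · exact Finset.le_sup' (fun j => |ℓ j|) hkl
  · rw [eq_zero_of_sum_add_mul_eq_of_abs_le (hW k) hγ hmax (h k hkl), abs_zero]
    exact (abs_nonneg _).trans (Finset.le_sup' (fun j => |ℓ j|) hne.choose_spec)

end

theorem regularized_harmonic_confidence_bound_general
    (n : ℕ) (W : Matrix (Fin n) (Fin n) ℝ)
    (hnn : ∀ i j, 0 ≤ W i j)
    (γ : ℝ) (hγ : 0 < γ)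
    (l : Finset (Fin n)) (hne : l.Nonempty)
    (L : Matrix (Fin n) (Fin n) ℝ)
    (hL : L = Matrix.diagonal (fun i => ∑ j, W i j) - W)
    (Luu : Matrix {i // i ∈ lᶜ} {i // i ∈ lᶜ} ℝ)
    (hLuu : Luu = Matrix.of fun i j => L i.1 j.1)
    (Wul : Matrix {i // i ∈ lᶜ} {i // i ∈ l} ℝ)
    (hWul : Wul = Matrix.of fun i j => W i.1 j.1)
    (ℓ : Fin n → ℝ)
    (hharm : (Luu + γ • (1 : Matrix {i // i ∈ lᶜ} {i // i ∈ lᶜ} ℝ)).mulVec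
        (fun i => ℓ i.1) = Wul.mulVec (fun j => ℓ j.1)) :
    (∀ i : Fin n, i ∉ l → |ℓ i| ≤ l.sup' hne fun j => |ℓ j|) ∧
    ((∀ j ∈ l, ℓ j = -1 ∨ ℓ j = 1) → ∀ i : Fin n, |ℓ i| ≤ 1) := by
  subst hL hLuu hWul
  have hmax := (isRegularizedHarmonic_of_mulVec_eq hharm).abs_le_sup' hnn hγ hne
  refine ⟨fun i _ => hmax i, fun hpm i => (hmax i).trans (Finset.sup'_le _ _ fun j hj => ?_)⟩
  rcases hpm j hj with h | h <;> simp [h]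

/-- Maximum principle for the regularized harmonic solution:
the confidence of every unlabeled vertex is bounded by the largest labeled
confidence, and if the labels are in `{−1, 1}` then `|ℓ_i| ≤ 1` for all `i`. -/
theorem regularized_harmonic_confidence_bound
    (n : ℕ) (W : Matrix (Fin n) (Fin n) ℝ)
    (hsym : W.IsSymm) (hnn : ∀ i j, 0 ≤ W i j)
    (γ : ℝ) (hγ : 0 < γ)
    (l : Finset (Fin n)) (hne : l.Nonempty)
    (L : Matrix (Fin n) (Fin n) ℝ)
    (hL : L = Matrix.diagonal (fun i => ∑ j, W i j) - W)
    (Luu : Matrix {i // i ∈ lᶜ} {i // i ∈ lᶜ} ℝ)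
    (hLuu : Luu = Matrix.of fun i j => L i.1 j.1)
    (Wul : Matrix {i // i ∈ lᶜ} {i // i ∈ l} ℝ)
    (hWul : Wul = Matrix.of fun i j => W i.1 j.1)
    (ℓ : Fin n → ℝ)
    (hharm : (Luu + γ • (1 : Matrix {i // i ∈ lᶜ} {i // i ∈ lᶜ} ℝ)).mulVec
        (fun i => ℓ i.1) = Wul.mulVec (fun j => ℓ j.1)) :
    (∀ i : Fin n, i ∉ l → |ℓ i| ≤ l.sup' hne fun j => |ℓ j|) ∧
    ((∀ j ∈ l, ℓ j = -1 ∨ ℓ j = 1) → ∀ i : Fin n, |ℓ i| ≤ 1) :=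
  regularized_harmonic_confidence_bound_general n W hnn γ hγ l hne L hL Luu hLuu Wul hWul ℓ hharm
end

section
/- Let sgn : ℝ → ℝ denote the sign function and L(y', y) = 1 if sgn(y') ≠ y and 0 otherwise the zero-one loss. Let f_1, …, f_n ∈ ℝ be prediction values, ℓ_1, …, ℓ_n ∈ ℝ be graph-induced soft labels, and y_1, …, y_n ∈ {−1, 1} be true labels. Then the empirical risk on the true labels is bounded by the empirical risk on the induced labels plus the squared deviation of the soft labels: (1/n) Σ_{i=1}^n L(f_i, y_i) ≤ (1/n) Σ_{i=1}^n L(f_i, sgn(ℓ_i)) + (1/n) Σ_{i=1}^n (ℓ_i − y_i)². -/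
open BigOperators

/-- The sign function: `1` for positive, `−1` for negative, `0` at `0`. -/
noncomputable def sgn (t : ℝ) : ℝ := if 0 < t then 1 else if t < 0 then -1 else 0

/-- The zero-one loss: `1` if `sgn y' ≠ y`, else `0`. -/
noncomputable def zeroOneLoss (y' y : ℝ) : ℝ := if sgn y' ≠ y then 1 else 0

lemma pointwise_bound (a b c : ℝ) (hc : c = -1 ∨ c = 1) :
    zeroOneLoss a c ≤ zeroOneLoss a (sgn b) + (b - c) ^ 2 := by
  unfold zeroOneLoss
  by_cases h : sgn b = c
  · rw [h]; nlinarith [sq_nonneg (b - c)]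
  · -- sgn b ≠ c, so (b - c)^2 ≥ 1
    have hb : (b - c) ^ 2 ≥ 1 := by
      rcases hc with rfl | rfl
      · -- c = -1, sgn b ≠ -1 means b ≥ 0
        have : 0 ≤ b := by
          by_contra hb0
          push_neg at hb0
          apply h
          unfold sgn
          rw [if_neg (by linarith), if_pos hb0]
        nlinarith
      · have : b ≤ 0 := by
          by_contra hb0
          push_neg at hb0
          apply h
          unfold sgn
          rw [if_pos hb0]
        nlinarith
    by_cases h1 : sgn a ≠ c <;> by_cases h2 : sgn a ≠ sgn b <;> simp [h1, h2] <;> nlinarith [abs_nonneg (b - c), sq_abs (b - c)]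

/-- The empirical risk on the true labels is bounded by the
empirical risk on the graph-induced labels plus the squared deviation of the
soft labels. -/
theorem empirical_risk_le_induced_risk_add_sq_deviation
    (n : ℕ) (hn : 0 < n) (f ℓ y : Fin n → ℝ)
    (hy : ∀ i, y i = -1 ∨ y i = 1) :
    (1 / n) * ∑ i, zeroOneLoss (f i) (y i) ≤
      (1 / n) * ∑ i, zeroOneLoss (f i) (sgn (ℓ i)) +
      (1 / n) * ∑ i, (ℓ i - y i) ^ 2 := by
  rw [← mul_add, ← Finset.sum_add_distrib]
  apply mul_le_mul_of_nonneg_left _ (by positivity)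
  exact Finset.sum_le_sum fun i _ => pointwise_bound (f i) (ℓ i) (y i) (hy i)
end

section
/- Let sgn : ℝ → ℝ denote the sign function and L(y', y) = 1 if sgn(y') ≠ y and 0 otherwise the zero-one loss. Let 0 ≤ ε ≤ 1, let f_1, …, f_n ∈ ℝ be prediction values, ℓ_1, …, ℓ_n ∈ ℝ be graph-induced soft labels with |ℓ_i| ≤ 1 for all i, y_1, …, y_n ∈ {−1, 1} be true labels, and let n_ε = #{i : |ℓ_i| < ε}. Then (1/n) Σ_{i=1}^n L(f_i, y_i) ≤ (1/n) Σ_{i : |ℓ_i| ≥ ε} L(f_i, sgn(ℓ_i)) + (2ε n_ε)/n + (1/n) Σ_{i=1}^n (ℓ_i − y_i)²; i.e., the empirical risk on the true labels is bounded by the thresholded empirical risk on the induced labels plus 2ε n_ε / n plus the squared deviation of the soft labels. -/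
open BigOperators

lemma zol_le_one (a b : ℝ) : zeroOneLoss a b ≤ 1 := by
  unfold zeroOneLoss; split_ifs <;> norm_num

lemma zol_nonneg (a b : ℝ) : 0 ≤ zeroOneLoss a b := by
  unfold zeroOneLoss; split_ifs <;> norm_num

lemma keyA (a l y : ℝ) (hy : y = -1 ∨ y = 1) :
    zeroOneLoss a y ≤ zeroOneLoss a (sgn l) + (l - y)^2 := by
  by_cases h1 : sgn a = y
  · have hz : zeroOneLoss a y = 0 := by simp [zeroOneLoss, h1]
    rw [hz]
    nlinarith [sq_nonneg (l - y), zol_nonneg a (sgn l)]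
  · have hL : zeroOneLoss a y = 1 := by simp [zeroOneLoss, h1]
    rw [hL]
    by_cases h2 : sgn a = sgn l
    · have hsy : sgn l ≠ y := fun h => h1 (h2.trans h)
      have hsq : 1 ≤ (l - y)^2 := by
        rcases hy with rfl | rfl
        · have hl : 0 ≤ l := by
            by_contra h; push_neg at h
            exact hsy (by simp [sgn, h, not_lt.mpr h.le])
          nlinarith
        · have hl : l ≤ 0 := by
            by_contra h; push_neg at h
            exact hsy (by simp [sgn, h])
          nlinarith
      linarith [zol_nonneg a (sgn l)]
    · have hE : zeroOneLoss a (sgn l) = 1 := by simp [zeroOneLoss, h2]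
      rw [hE]; nlinarith [sq_nonneg (l - y)]

lemma keyB (a l y ε : ℝ) (hy : y = -1 ∨ y = 1) (h : |l| < ε) :
    zeroOneLoss a y ≤ 2*ε + (l - y)^2 := by
  have h1 := zol_le_one a y
  have h2 := abs_lt.mp h
  rcases hy with rfl | rfl <;> nlinarith [h2.1, h2.2]

/-- The empirical risk on the true labels is bounded by the
thresholded empirical risk on the induced labels, plus `2ε n_ε / n`, plus the
squared deviation of the soft labels. -/
theorem empirical_risk_le_thresholded_risk
    (n : ℕ) (hn : 0 < n) (ε : ℝ) (hε0 : 0 ≤ ε) (hε1 : ε ≤ 1)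
    (f ℓ y : Fin n → ℝ)
    (hℓ : ∀ i, |ℓ i| ≤ 1)
    (hy : ∀ i, y i = -1 ∨ y i = 1) :
    (1 / n) * ∑ i, zeroOneLoss (f i) (y i) ≤
      (1 / n) * ∑ i ∈ Finset.univ.filter (fun i => ε ≤ |ℓ i|),
          zeroOneLoss (f i) (sgn (ℓ i)) +
      (2 * ε * (Finset.univ.filter (fun i => |ℓ i| < ε)).card) / n +
      (1 / n) * ∑ i, (ℓ i - y i) ^ 2 := by
  classical
  set p : Fin n → Prop := fun i => ε ≤ |ℓ i| with hp
  have hsplit : (Finset.univ.filter (fun i => |ℓ i| < ε)) =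
      Finset.univ.filter (fun i => ¬ p i) := by
    simp [hp, not_le]
  have key : ∑ i, zeroOneLoss (f i) (y i) ≤
      (∑ i ∈ Finset.univ.filter p, zeroOneLoss (f i) (sgn (ℓ i)))
      + 2*ε*((Finset.univ.filter (fun i => |ℓ i| < ε)).card)
      + ∑ i, (ℓ i - y i)^2 := by
    rw [← Finset.sum_filter_add_sum_filter_not Finset.univ p
        (fun i => zeroOneLoss (f i) (y i)),
        ← Finset.sum_filter_add_sum_filter_not Finset.univ p
        (fun i => (ℓ i - y i)^2), hsplit]
    have h1 : ∑ i ∈ Finset.univ.filter p, zeroOneLoss (f i) (y i) ≤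
        ∑ i ∈ Finset.univ.filter p, zeroOneLoss (f i) (sgn (ℓ i))
        + ∑ i ∈ Finset.univ.filter p, (ℓ i - y i)^2 := by
      rw [← Finset.sum_add_distrib]
      exact Finset.sum_le_sum fun i _ => keyA (f i) (ℓ i) (y i) (hy i)
    have h2 : ∑ i ∈ Finset.univ.filter (fun i => ¬ p i), zeroOneLoss (f i) (y i) ≤
        2*ε*((Finset.univ.filter (fun i => ¬ p i)).card)
        + ∑ i ∈ Finset.univ.filter (fun i => ¬ p i), (ℓ i - y i)^2 := by
      have := Finset.sum_le_sum (s := Finset.univ.filter (fun i : Fin n => ¬ p i))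
        (f := fun i => zeroOneLoss (f i) (y i))
        (g := fun i => 2*ε + (ℓ i - y i)^2)
        (fun i hi => keyB (f i) (ℓ i) (y i) ε (hy i)
          (by simpa [hp, not_le] using (Finset.mem_filter.mp hi).2))
      simpa [Finset.sum_add_distrib, Finset.sum_const, nsmul_eq_mul, mul_comm,
        mul_assoc, mul_left_comm] using this
    linarith
  have hn' : (0:ℝ) ≤ 1/n := by positivity
  have hc : (2 * ε * ((Finset.univ.filter (fun i => |ℓ i| < ε)).card : ℝ)) / n
      = (1/n) * (2 * ε * ((Finset.univ.filter (fun i => |ℓ i| < ε)).card : ℝ)) := by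
    ring
  rw [hc, ← mul_add, ← mul_add]
  exact mul_le_mul_of_nonneg_left key hn'
end

section
/- Let λ_M ≥ 0, 0 < c_u ≤ 1, let n_l ≥ 1 be a natural number, and suppose γ ≥ n_l^{3/2} and γ ≥ λ_M. Then 2·[ √2/(γ + 1) + √(2 n_l)·((1 − √c_u)/√c_u)·(λ_M + γ)/(γ² + 1) ] ≤ (2√2 + 4√2·(1 − √c_u)/√c_u)/n_l; i.e., when the regularizer satisfies γ_g = Ω(n_l^{3/2}), the stability coefficient β of the relaxed harmonic function solution is O(1/n_l). -/
/-! With `s = (1 - √c_u)/√c_u ≥ 0`, the two terms are bounded separately. Since `γ ≥ n_l`,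
`√2/(γ+1) ≤ √2/n_l`. Since `λ_M ≤ γ`, `(λ_M + γ)/(γ² + 1) ≤ 2/γ`, and `γ ≥ n_l^{3/2}` turns the
remaining factor `√n_l/γ` into at most `1/n_l`. -/

open Real

lemma Real.rpow_three_halves {x : ℝ} (hx : 0 ≤ x) : x ^ (3 / 2 : ℝ) = x * √x := by
  rw [show (3 / 2 : ℝ) = 1 + 1 / 2 by norm_num, rpow_add' hx (by norm_num), rpow_one,
    ← sqrt_eq_rpow]

lemma sqrt_div_le_inv_of_rpow_three_halves_le {x γ : ℝ} (hx : 0 < x)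
    (h : x ^ (3 / 2 : ℝ) ≤ γ) : √x / γ ≤ x⁻¹ := by
  rw [Real.rpow_three_halves hx.le] at h
  have hsqrt : 0 < √x := sqrt_pos.mpr hx
  calc √x / γ ≤ √x / (x * √x) := div_le_div_of_nonneg_left hsqrt.le (by positivity) h
    _ = x⁻¹ := by field_simp

lemma add_div_sq_add_one_le_two_div {l γ : ℝ} (hγ : 0 < γ) (hl : l ≤ γ) :
    (l + γ) / (γ ^ 2 + 1) ≤ 2 / γ := by
  rw [div_le_div_iff₀ (by positivity) hγ]
  nlinarith

lemma one_sub_sqrt_div_sqrt_nonneg {c : ℝ} (hc : c ≤ 1) : 0 ≤ (1 - √c) / √c :=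
  div_nonneg (sub_nonneg.mpr (sqrt_le_one.mpr hc)) (sqrt_nonneg c)

theorem stability_coefficient_O_one_over_nl_general
    (lM γ cu : ℝ) (nl : ℕ)
    (hcu1 : cu ≤ 1) (hnl : 1 ≤ nl)
    (hγ1 : (nl : ℝ) ^ ((3 : ℝ) / 2) ≤ γ) (hγ2 : lM ≤ γ) :
    2 * (Real.sqrt 2 / (γ + 1) +
        Real.sqrt (2 * nl) * ((1 - Real.sqrt cu) / Real.sqrt cu) *
          (lM + γ) / (γ ^ 2 + 1)) ≤
    (2 * Real.sqrt 2 +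
        4 * Real.sqrt 2 * ((1 - Real.sqrt cu) / Real.sqrt cu)) / nl := by
  set s := (1 - √cu) / √cu
  have hs : 0 ≤ s := one_sub_sqrt_div_sqrt_nonneg hcu1
  have hnl1 : (1 : ℝ) ≤ nl := by exact_mod_cast hnl
  have hnl0 : (0 : ℝ) < nl := by linarith
  have hγnl : (nl : ℝ) ≤ γ := (self_le_rpow_of_one_le hnl1 (by norm_num)).trans hγ1
  have hγ : 0 < γ := hnl0.trans_le hγnl
  have first : √2 / (γ + 1) ≤ √2 / nl :=
    div_le_div_of_nonneg_left (sqrt_nonneg 2) hnl0 (by linarith)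
  have second : √(2 * nl) * s * (lM + γ) / (γ ^ 2 + 1) ≤ 2 * √2 * s / nl :=
    calc √(2 * nl) * s * (lM + γ) / (γ ^ 2 + 1)
        = √2 * s * √nl * ((lM + γ) / (γ ^ 2 + 1)) := by rw [sqrt_mul zero_le_two]; ring
      _ ≤ √2 * s * √nl * (2 / γ) :=
          mul_le_mul_of_nonneg_left (add_div_sq_add_one_le_two_div hγ hγ2) (by positivity)
      _ = 2 * √2 * s * (√nl / γ) := by ring
      _ ≤ 2 * √2 * s * (nl : ℝ)⁻¹ :=
          mul_le_mul_of_nonneg_left (sqrt_div_le_inv_of_rpow_three_halves_le hnl0 hγ1)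
            (by positivity)
      _ = 2 * √2 * s / nl := by ring
  calc 2 * (√2 / (γ + 1) + √(2 * nl) * s * (lM + γ) / (γ ^ 2 + 1))
      ≤ 2 * (√2 / nl + 2 * √2 * s / nl) := by gcongr
    _ = (2 * √2 + 4 * √2 * s) / nl := by ring

/-- When `γ ≥ n_l^{3/2}` (and `γ ≥ λ_M`), the bound on the
stability coefficient of the relaxed harmonic function solution is `O(1/n_l)`:
`2[√2/(γ+1) + √(2 n_l)((1−√c_u)/√c_u)(λ_M+γ)/(γ²+1)]
  ≤ (2√2 + 4√2 (1−√c_u)/√c_u)/n_l`. -/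
theorem stability_coefficient_O_one_over_nl
    (lM γ cu : ℝ) (nl : ℕ)
    (hlM : 0 ≤ lM) (hcu0 : 0 < cu) (hcu1 : cu ≤ 1) (hnl : 1 ≤ nl)
    (hγ1 : (nl : ℝ) ^ ((3 : ℝ) / 2) ≤ γ) (hγ2 : lM ≤ γ) :
    2 * (Real.sqrt 2 / (γ + 1) +
        Real.sqrt (2 * nl) * ((1 - Real.sqrt cu) / Real.sqrt cu) *
          (lM + γ) / (γ ^ 2 + 1)) ≤
    (2 * Real.sqrt 2 +
        4 * Real.sqrt 2 * ((1 - Real.sqrt cu) / Real.sqrt cu)) / nl :=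
  stability_coefficient_O_one_over_nl_general lM γ cu nl hcu1 hnl hγ1 hγ2
end

section
/- Let x_1, …, x_n ∈ ℝ² be points and W a symmetric n×n matrix with nonnegative entries such that every edge is axis-aligned (for all i, j with w_ij > 0, x_i and x_j agree in the first or in the second coordinate), with Laplacian L = D − W. Suppose moreover Σ_{i,j} w_ij (x_{i1} − x_{j1})² = Σ_{i,j} w_ij (x_{i2} − x_{j2})² = Δ. Let l ⊆ {1,…,n} be the labeled set with labels y_i ∈ {−1,1}, V(f, x, y) = max{1 − y·f(x), 0} the hinge loss, and γ, γ_u ≥ 0. Then for every linear function f(x) = α₁ x₁ + α₂ x₂, the manifold-regularized SVM objective equals a supervised SVM objective with a modified regularization weight: Σ_{i ∈ l} V(f, x_i, y_i) + γ(α₁² + α₂²) + γ_u fᵀ L f = Σ_{i ∈ l} V(f, x_i, y_i) + (γ + γ_u Δ/2)(α₁² + α₂²). -/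
open Matrix BigOperators

/-- On an axis-aligned graph over points in `ℝ²` with
`∑ w_ij (x_{i1} − x_{j1})² = ∑ w_ij (x_{i2} − x_{j2})² = Δ`, the
manifold-regularized linear SVM objective equals a supervised SVM objective
with the modified regularization weight `γ + γ_u Δ / 2`. -/
theorem manifold_regularized_linear_svm_eq_supervised
    (n : ℕ) (x : Fin n → ℝ × ℝ)
    (W : Matrix (Fin n) (Fin n) ℝ)
    (hsym : W.IsSymm) (hnn : ∀ i j, 0 ≤ W i j)
    (haxis : ∀ i j, 0 < W i j → (x i).1 = (x j).1 ∨ (x i).2 = (x j).2)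
    (L : Matrix (Fin n) (Fin n) ℝ)
    (hL : L = Matrix.diagonal (fun i => ∑ j, W i j) - W)
    (Δ : ℝ)
    (hΔ1 : ∑ i, ∑ j, W i j * ((x i).1 - (x j).1) ^ 2 = Δ)
    (hΔ2 : ∑ i, ∑ j, W i j * ((x i).2 - (x j).2) ^ 2 = Δ)
    (l : Finset (Fin n)) (y : Fin n → ℝ)
    (hy : ∀ i ∈ l, y i = -1 ∨ y i = 1)
    (γ γu : ℝ) (hγ : 0 ≤ γ) (hγu : 0 ≤ γu)
    (α₁ α₂ : ℝ)
    (fv : Fin n → ℝ)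
    (hfv : ∀ i, fv i = α₁ * (x i).1 + α₂ * (x i).2) :
    ∑ i ∈ l, max (1 - y i * fv i) 0 + γ * (α₁ ^ 2 + α₂ ^ 2) +
        γu * (fv ⬝ᵥ L.mulVec fv) =
      ∑ i ∈ l, max (1 - y i * fv i) 0 +
        (γ + γu * Δ / 2) * (α₁ ^ 2 + α₂ ^ 2) := by
  have hWsym : ∀ i j, W j i = W i j := by
    intro i j
    have := congrFun (congrFun hsym j) i
    simpa [Matrix.transpose_apply] using this.symm
  set A := ∑ i, ∑ j, W i j * fv i ^ 2 with hA
  set B := ∑ i, ∑ j, W i j * (fv i * fv j) with hB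
  set C := ∑ i, ∑ j, W i j * fv j ^ 2 with hC
  -- symmetry: C = A
  have hCA : C = A := by
    rw [hC, hA, Finset.sum_comm]
    exact Finset.sum_congr rfl fun j _ => Finset.sum_congr rfl fun i _ => by
      rw [hWsym i j]
  -- Step 1: quadratic form equals A - B
  have h1 : fv ⬝ᵥ L.mulVec fv = A - B := by
    subst hL
    rw [Matrix.sub_mulVec, dotProduct_sub]
    have hd : fv ⬝ᵥ (Matrix.diagonal fun i => ∑ j, W i j).mulVec fv = A := by
      rw [hA]
      simp only [dotProduct, Matrix.mulVec_diagonal]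
      refine Finset.sum_congr rfl fun i _ => ?_
      rw [Finset.sum_mul, Finset.mul_sum]
      exact Finset.sum_congr rfl fun j _ => by ring
    have hw : fv ⬝ᵥ W.mulVec fv = B := by
      rw [hB]
      simp only [dotProduct, Matrix.mulVec]
      refine Finset.sum_congr rfl fun i _ => ?_
      rw [Finset.mul_sum]
      exact Finset.sum_congr rfl fun j _ => by ring
    rw [hd, hw]
  -- Step 2: ∑∑ W (fv i - fv j)² = A - 2B + C
  have h2 : ∑ i, ∑ j, W i j * (fv i - fv j) ^ 2 = A - 2 * B + C := by
    rw [hA, hB, hC]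
    simp only [Finset.mul_sum, ← Finset.sum_sub_distrib, ← Finset.sum_add_distrib]
    refine Finset.sum_congr rfl fun i _ => Finset.sum_congr rfl fun j _ => by ring
  -- Step 3: per-term expansion using axis alignment
  have h3 : ∀ i j : Fin n, W i j * (fv i - fv j) ^ 2
      = α₁ ^ 2 * (W i j * ((x i).1 - (x j).1) ^ 2)
        + α₂ ^ 2 * (W i j * ((x i).2 - (x j).2) ^ 2) := by
    intro i j
    rcases lt_or_eq_of_le (hnn i j) with hpos | hzero
    · have hfd : fv i - fv j = α₁ * ((x i).1 - (x j).1) + α₂ * ((x i).2 - (x j).2) := by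
        rw [hfv i, hfv j]; ring
      rcases haxis i j hpos with h | h
      · rw [hfd, h]; ring
      · rw [hfd, h]; ring
    · rw [← hzero]; ring
  have hsum : ∑ i, ∑ j, W i j * (fv i - fv j) ^ 2
      = α₁ ^ 2 * (∑ i, ∑ j, W i j * ((x i).1 - (x j).1) ^ 2)
        + α₂ ^ 2 * (∑ i, ∑ j, W i j * ((x i).2 - (x j).2) ^ 2) := by
    rw [Finset.mul_sum, Finset.mul_sum, ← Finset.sum_add_distrib]
    refine Finset.sum_congr rfl fun i _ => ?_
    rw [Finset.mul_sum, Finset.mul_sum, ← Finset.sum_add_distrib]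
    exact Finset.sum_congr rfl fun j _ => h3 i j
  rw [hΔ1, hΔ2] at hsum
  have hQ : fv ⬝ᵥ L.mulVec fv = Δ / 2 * (α₁ ^ 2 + α₂ ^ 2) := by
    rw [h1]; rw [h2, hCA] at hsum; linarith
  rw [hQ]; ring
end
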